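/- arXiv:1810.06145 — 2 statements merged into one kernel-verified Lean document; each statement's English description precedes it below -/
import Mathlib

section
/- Transfer of almost ι-structures along homotopy equivalences: if (C1, ῑ1) is an almost ι-complex and f : C1 → C2, g : C2 → C1 are homotopy inverse chain maps of F[U]-complexes, then ῑ2 := f ∘ ῑ1 ∘ g makes (C2, ῑ2) an almost ι-complex, and f, g are local maps realizing a local equivalence between (C1, ῑ1) and (C2, ῑ2). -/
open Polynomial

abbrev F2 : Type := ZMod 2
abbrev R : Type := Polynomial F2

noncomputable section

namespace AI

/-- The variable `U`. -/
def Uu : R := Polynomial.X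

/-- The free `R`-module of rank `n`. -/
abbrev V (n : ℕ) : Type := Fin n → R

/-- The `i`-th standard basis vector. -/
def e {n : ℕ} (i : Fin n) : V n := fun j => if j = i then 1 else 0

/-- The `i`-th standard basis vector over `F2`. -/
def e2 {n : ℕ} (i : Fin n) : Fin n → F2 := fun j => if j = i then 1 else 0

/-- `x` lies in the image of multiplication by `U`. -/
def modU {n : ℕ} (x : V n) : Prop := ∀ j, (x j).coeff 0 = 0

/-- `x` is homogeneous of degree `c` with respect to the generator gradings `gr`
(where `deg U = -2`). -/
def IsHomog {n : ℕ} (gr : Fin n → ℤ) (c : ℤ) (x : V n) : Prop :=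
  ∀ (j : Fin n) (m : ℕ), (x j).coeff m ≠ 0 → gr j - 2 * (m : ℤ) = c

/-- `f` is a graded `R`-linear map of degree `dg`. -/
def GradedMap {m n : ℕ} (gr₁ : Fin m → ℤ) (gr₂ : Fin n → ℤ) (dg : ℤ)
    (f : V m →ₗ[R] V n) : Prop :=
  ∀ i : Fin m, IsHomog gr₂ (gr₁ i + dg) (f (e i))

/-- The raw data of a free finitely generated `ℤ`-graded complex over `R = F[U]`. -/
structure PreCplx where
  n : ℕ
  gr : Fin n → ℤ
  d : V n →ₗ[R] V n

def IsCycle (C : PreCplx) (x : V C.n) : Prop := C.d x = 0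

def IsBdry (C : PreCplx) (x : V C.n) : Prop := ∃ y, C.d y = x

/-- `x` is a cycle representing a `U`-nontorsion homology class. -/
def NontorsionClass (C : PreCplx) (x : V C.n) : Prop :=
  IsCycle C x ∧ ∀ k : ℕ, ¬ IsBdry C ((Uu ^ k) • x)

/-- `U⁻¹H_*(C) ≅ F[U, U⁻¹]`, generated by a degree-zero cycle (normalization
convention: the maximal degree of a `U`-nontorsion cycle class is zero, so the
localized homology is supported in even degrees). -/
def HtowerCond (C : PreCplx) : Prop :=
  ∃ x : V C.n, IsCycle C x ∧ IsHomog C.gr 0 x ∧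
    (∀ k : ℕ, ¬ IsBdry C ((Uu ^ k) • x)) ∧
    (∀ y : V C.n, IsCycle C y →
      ∃ (k : ℕ) (p : R) (z : V C.n), (Uu ^ k) • y = p • x + C.d z)

/-- `C` is a genuine graded chain complex. -/
def IsCplx (C : PreCplx) : Prop :=
  GradedMap C.gr C.gr (-1) C.d ∧ C.d ∘ₗ C.d = 0

/-- `f` and `g` are homotopic mod `U`. -/
def HomotopicModU (C₁ C₂ : PreCplx) (f g : V C₁.n →ₗ[R] V C₂.n) : Prop :=
  ∃ H : V C₁.n →ₗ[R] V C₂.n, GradedMap C₁.gr C₂.gr 1 H ∧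
    ∀ x, modU ((f + g + H ∘ₗ C₁.d + C₂.d ∘ₗ H) x)

/-- The raw data of an almost ι-complex. -/
structure PreAI extends PreCplx where
  ι : V n →ₗ[R] V n

/-- `ω = 1 + ι`. -/
def omega (C : PreAI) : V C.n →ₗ[R] V C.n := LinearMap.id + C.ι

/-- `C` is an almost ι-complex. -/
def IsAICplx (C : PreAI) : Prop :=
  IsCplx C.toPreCplx ∧
  GradedMap C.gr C.gr 0 C.ι ∧
  (∀ x, modU ((C.ι ∘ₗ C.d + C.d ∘ₗ C.ι) x)) ∧
  HomotopicModU C.toPreCplx C.toPreCplx (C.ι ∘ₗ C.ι) LinearMap.id ∧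
  HtowerCond C.toPreCplx

/-- `C` is a genuine ι-complex: `ι` is an honest chain map whose square is
genuinely chain homotopic to the identity. -/
def IsIotaCplx (C : PreAI) : Prop :=
  IsCplx C.toPreCplx ∧
  GradedMap C.gr C.gr 0 C.ι ∧
  C.ι ∘ₗ C.d = C.d ∘ₗ C.ι ∧
  (∃ H : V C.n →ₗ[R] V C.n, GradedMap C.gr C.gr 1 H ∧
    C.ι ∘ₗ C.ι + LinearMap.id = H ∘ₗ C.d + C.d ∘ₗ H) ∧
  HtowerCond C.toPreCplx

/-- A reduced complex: the differential vanishes mod `U`. -/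
def Reduced (C : PreAI) : Prop := ∀ x, modU (C.d x)

/-- `f` is an almost ι-morphism. -/
def isAIMorphism (C₁ C₂ : PreAI) (f : V C₁.n →ₗ[R] V C₂.n) : Prop :=
  GradedMap C₁.gr C₂.gr 0 f ∧
  f ∘ₗ C₁.d = C₂.d ∘ₗ f ∧
  HomotopicModU C₁.toPreCplx C₂.toPreCplx (f ∘ₗ C₁.ι) (C₂.ι ∘ₗ f)

/-- A local map: an almost ι-morphism inducing an isomorphism on `U`-localized
homology (equivalently, with the normalization conventions in force, preserving
`U`-nontorsion cycle classes). -/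
def isLocalMap (C₁ C₂ : PreAI) (f : V C₁.n →ₗ[R] V C₂.n) : Prop :=
  isAIMorphism C₁ C₂ f ∧
  ∀ x, NontorsionClass C₁.toPreCplx x → NontorsionClass C₂.toPreCplx (f x)

/-- Local equivalence of almost ι-complexes. -/
def LocallyEquiv (C₁ C₂ : PreAI) : Prop :=
  (∃ f, isLocalMap C₁ C₂ f) ∧ (∃ g, isLocalMap C₂ C₁ g)

/-- The tensor product (over `R`) of linear maps between free modules,
in the bases indexed by `finProdFinEquiv`. -/
def tmap {m n m' n' : ℕ} (f : V m →ₗ[R] V m') (g : V n →ₗ[R] V n') :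
    V (m * n) →ₗ[R] V (m' * n') where
  toFun x := fun p => ∑ q : Fin (m * n),
    x q * f (e (finProdFinEquiv.symm q).1) (finProdFinEquiv.symm p).1
        * g (e (finProdFinEquiv.symm q).2) (finProdFinEquiv.symm p).2
  map_add' x y := by
    funext p
    simp [Pi.add_apply, add_mul, Finset.sum_add_distrib]
  map_smul' c x := by
    funext p
    simp only [RingHom.id_apply, Pi.smul_apply, smul_eq_mul, Finset.mul_sum]
    exact Finset.sum_congr rfl fun q _ => by ring

/-- The tensor product of complexes. -/
def tensorPre (C₁ C₂ : PreCplx) : PreCplx where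
  n := C₁.n * C₂.n
  gr := fun q => C₁.gr (finProdFinEquiv.symm q).1 + C₂.gr (finProdFinEquiv.symm q).2
  d := tmap C₁.d LinearMap.id + tmap LinearMap.id C₂.d

/-- The tensor product of almost ι-complexes. -/
def tensorAI (C₁ C₂ : PreAI) : PreAI where
  toPreCplx := tensorPre C₁.toPreCplx C₂.toPreCplx
  ι := tmap C₁.ι C₂.ι

/-- The transpose of a square matrix map (the dual map in the dual basis). -/
def tr {n : ℕ} (f : V n →ₗ[R] V n) : V n →ₗ[R] V n where
  toFun x := fun j => ∑ i : Fin n, x i * f (e j) i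
  map_add' x y := by
    funext j
    simp [Pi.add_apply, add_mul, Finset.sum_add_distrib]
  map_smul' c x := by
    funext j
    simp only [RingHom.id_apply, Pi.smul_apply, smul_eq_mul, Finset.mul_sum]
    exact Finset.sum_congr rfl fun i _ => by ring

/-- The dual complex. -/
def dualPre (C : PreCplx) : PreCplx where
  n := C.n
  gr := fun i => -C.gr i
  d := tr C.d

/-- The dual almost ι-complex. -/
def dualAI (C : PreAI) : PreAI where
  toPreCplx := dualPre C.toPreCplx
  ι := tr C.ι

/-- The trivial complex `C(0) = (F[U], ∂ = 0, ι = id)`. -/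
def cZero : PreAI := ⟨⟨1, fun _ => 0, 0⟩, LinearMap.id⟩

/-- The contraction map `C ⊗ C^∨ → F[U]`, `x ⊗ y ↦ y(x)`. -/
def contr (n : ℕ) : V (n * n) →ₗ[R] V 1 where
  toFun x := fun _ => ∑ i : Fin n, x (finProdFinEquiv (i, i))
  map_add' x y := by funext j; simp [Pi.add_apply, Finset.sum_add_distrib]
  map_smul' c x := by
    funext j
    simp only [RingHom.id_apply, Pi.smul_apply, smul_eq_mul, Finset.mul_sum]

/-! ### Standard and augmented complexes -/

/-- The `i`-th symbol (0-indexed) of the parameter sequence, padded by zeros. -/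
def seqAt (M : List ℤ) (i : ℕ) : ℤ := M.getD i 0

/-- Grading step of a `b`-arrow. -/
def bstep (b : ℤ) : ℤ := (if 0 < b then 1 else -1) - 2 * b

/-- Grading of the generator `T_i` of the standard/augmented complex. -/
def stdGr (M : List ℤ) (i : ℕ) : ℤ :=
  ∑ s ∈ Finset.range i, if s % 2 = 1 then bstep (seqAt M s) else 0

/-- A linear endomorphism of `V n` given by a matrix of coefficients. -/
def ofMatrix {n : ℕ} (c : ℕ → ℕ → R) : V n →ₗ[R] V n where
  toFun x := fun j => ∑ i : Fin n, x i * c i j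
  map_add' x y := by
    funext j
    simp [Pi.add_apply, add_mul, Finset.sum_add_distrib]
  map_smul' r x := by
    funext j
    simp only [RingHom.id_apply, Pi.smul_apply, smul_eq_mul, Finset.mul_sum]
    exact Finset.sum_congr rfl fun i _ => by ring

/-- Matrix of the differential of the standard/augmented complex: the `b`-symbol
at (0-indexed) odd position `s` of `M` relates `T_s` and `T_{s+1}`. -/
def dCoef (M : List ℤ) (i j : ℕ) : R :=
  if i % 2 = 1 ∧ seqAt M i < 0 ∧ j = i + 1 then Uu ^ (seqAt M i).natAbs
  else if i % 2 = 0 ∧ 0 < i ∧ 0 < seqAt M (i - 1) ∧ j + 1 = i then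
    Uu ^ (seqAt M (i - 1)).natAbs
  else 0

/-- Matrix of `ω = 1 + ι` on the standard/augmented complex: the `a`-symbol at
(0-indexed) even position `s` of `M` relates `T_s` and `T_{s+1}`. -/
def wCoef (M : List ℤ) (i j : ℕ) : R :=
  if i % 2 = 0 ∧ seqAt M i = -1 ∧ j = i + 1 then 1
  else if i % 2 = 1 ∧ seqAt M (i - 1) = 1 ∧ j + 1 = i then 1
  else 0

/-- Matrix of `ι = 1 + ω` (char 2). -/
def iCoef (M : List ℤ) (i j : ℕ) : R :=
  (if i = j then 1 else 0) + wCoef M i j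

/-- The standard (even length) or augmented (odd length) complex on generators
`T_0, …, T_{M.length}` determined by the symbol sequence `M`. -/
def symCplx (M : List ℤ) : PreAI :=
  ⟨⟨M.length + 1, fun i => stdGr M i, ofMatrix (dCoef M)⟩, ofMatrix (iCoef M)⟩

/-- Validity of a standard parameter sequence. -/
def StdParams (M : List ℤ) : Prop :=
  M.length % 2 = 0 ∧
  ∀ i < M.length, if i % 2 = 0 then seqAt M i = 1 ∨ seqAt M i = -1 else seqAt M i ≠ 0

/-- Validity of an augmented parameter sequence. -/
def AugParams (M : List ℤ) : Prop :=
  M.length % 2 = 1 ∧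
  ∀ i < M.length, if i % 2 = 0 then seqAt M i = 1 ∨ seqAt M i = -1 else seqAt M i ≠ 0

/-- The modified order `<!` on `ℤ`: `−1 <! −2 <! ⋯ <! 0 <! ⋯ <! 2 <! 1`. -/
def ltB (x y : ℤ) : Prop :=
  (x < 0 ∧ 0 ≤ y) ∨ (x ≤ 0 ∧ 0 < y) ∨ (x < 0 ∧ y < 0 ∧ y < x) ∨ (0 < x ∧ 0 < y ∧ y < x)

def leB (x y : ℤ) : Prop := ltB x y ∨ x = y

/-- Strict lexicographic order on (zero-padded) parameter sequences. -/
def lexLt (M M' : List ℤ) : Prop :=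
  ∃ k : ℕ, (∀ i < k, seqAt M i = seqAt M' i) ∧ ltB (seqAt M k) (seqAt M' k)

def lexLe (M M' : List ℤ) : Prop := lexLt M M' ∨ ∀ i, seqAt M i = seqAt M' i

/-- A short map from the standard (even `M.length`) or augmented (odd `M.length`)
complex determined by `M` to `A`: the `ω`-condition (standard case) resp. the
`∂`-condition (augmented case) is waived on the final generator. -/
def isShortMap (M : List ℤ) (A : PreAI) (f : V (M.length + 1) →ₗ[R] V A.n) : Prop :=
  GradedMap (symCplx M).gr A.gr 0 f ∧
  (∀ i : Fin (M.length + 1), ((i : ℕ) < M.length ∨ M.length % 2 = 0) →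
    A.d (f (e i)) = f ((symCplx M).d (e i))) ∧
  (∀ i : Fin (M.length + 1), ((i : ℕ) < M.length ∨ M.length % 2 = 1) →
    modU ((omega A) (f (e i)) + f ((omega (symCplx M)) (e i))))

/-- A local short map: `T_0` goes to a `U`-nontorsion cycle class. -/
def isLocalShortMap (M : List ℤ) (A : PreAI) (f : V (M.length + 1) →ₗ[R] V A.n) : Prop :=
  isShortMap M A f ∧ NontorsionClass A.toPreCplx (f (e ⟨0, Nat.succ_pos _⟩))

/-- The sequence of invariants `s_i(A)` (1-indexed in the paper; 0-indexed here):
`s k` is the `≤!`-maximum of the `(k+1)`-st symbols among standard complexes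
locally mapping to `A` whose first `k` symbols are `s 0, …, s (k-1)`. -/
def IsInvariantSeq (A : PreAI) (s : ℕ → ℤ) : Prop :=
  ∀ k : ℕ,
    (∃ M : List ℤ, StdParams M ∧ (∃ f, isLocalMap (symCplx M) A f) ∧
      ∀ i ≤ k, seqAt M i = s i) ∧
    (∀ M : List ℤ, StdParams M → (∃ f, isLocalMap (symCplx M) A f) →
      (∀ i < k, seqAt M i = s i) → leB (seqAt M k) (s k))

/-- Reduction mod `U` of a linear map, as an `F₂`-linear map. -/
def mapHat {m n : ℕ} (f : V m →ₗ[R] V n) : (Fin m → F2) →ₗ[F2] (Fin n → F2) where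
  toFun x := fun j => ∑ i : Fin m, x i * (f (e i) j).coeff 0
  map_add' x y := by
    funext j
    simp [Pi.add_apply, add_mul, Finset.sum_add_distrib]
  map_smul' c x := by
    funext j
    simp only [RingHom.id_apply, Pi.smul_apply, smul_eq_mul, Finset.mul_sum]
    exact Finset.sum_congr rfl fun i _ => by ring

/-- The induced action `ω̂` on `C/U`. -/
def wHat (C : PreAI) : (Fin C.n → F2) →ₗ[F2] (Fin C.n → F2) := mapHat (omega C)

end AI

namespace AI
/-- aux lemmas -/
lemma basis_expand {n : ℕ} (x : V n) : x = ∑ i : Fin n, x i • e i := by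
  funext j
  rw [Finset.sum_apply]
  simp [e, Pi.smul_apply, smul_eq_mul, mul_ite, Finset.sum_ite_eq]

lemma map_apply' {m n : ℕ} (f : V m →ₗ[R] V n) (x : V m) (j : Fin n) :
    f x j = ∑ i : Fin m, x i * f (e i) j := by
  conv_lhs => rw [basis_expand x]
  rw [map_sum, Finset.sum_apply]
  simp [Pi.smul_apply, smul_eq_mul]

lemma Vadd_self {n : ℕ} (x : V n) : x + x = 0 := by
  funext j
  rw [Pi.add_apply]
  ext k
  simp only [Polynomial.coeff_add, Polynomial.coeff_zero]
  exact CharTwo.add_self_eq_zero _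

lemma Vnsmul_two {n : ℕ} (x : V n) : (2 : ℕ) • x = 0 := by
  rw [two_nsmul]; exact Vadd_self x

lemma Vzsmul_two {n : ℕ} (x : V n) : (2 : ℤ) • x = 0 := by
  rw [two_zsmul]; exact Vadd_self x

lemma modU_add' {n : ℕ} {x y : V n} (hx : modU x) (hy : modU y) : modU (x + y) := by
  intro j
  rw [Pi.add_apply, Polynomial.coeff_add, hx j, hy j, add_zero]

lemma modU_map {m n : ℕ} (f : V m →ₗ[R] V n) {x : V m} (h : modU x) : modU (f x) := by
  have hy : ∀ j, ∃ q, x j = Uu * q := fun j => Polynomial.X_dvd_iff.mpr (h j)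
  choose q hq using hy
  have hx : x = Uu • q := funext fun j => by rw [Pi.smul_apply, smul_eq_mul]; exact hq j
  rw [hx, map_smul]
  intro j
  rw [Pi.smul_apply, smul_eq_mul, Polynomial.mul_coeff_zero]
  simp [Uu]

lemma homog_add {n : ℕ} {gr : Fin n → ℤ} {c : ℤ} {x y : V n}
    (hx : IsHomog gr c x) (hy : IsHomog gr c y) : IsHomog gr c (x + y) := by
  intro j m h
  by_cases h1 : (x j).coeff m = 0
  · refine hy j m fun h2 => h ?_
    simp [Pi.add_apply, Polynomial.coeff_add, h1, h2]
  · exact hx j m h1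

lemma homog_map {m n : ℕ} {gr₁ : Fin m → ℤ} {gr₂ : Fin n → ℤ} {dg c : ℤ}
    {f : V m →ₗ[R] V n} (hf : GradedMap gr₁ gr₂ dg f)
    {x : V m} (hx : IsHomog gr₁ c x) : IsHomog gr₂ (c + dg) (f x) := by
  intro j k hk
  rw [map_apply', Polynomial.finset_sum_coeff] at hk
  obtain ⟨i, -, hi⟩ := Finset.exists_ne_zero_of_sum_ne_zero hk
  rw [Polynomial.coeff_mul] at hi
  obtain ⟨p, hpmem, hp⟩ := Finset.exists_ne_zero_of_sum_ne_zero hi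
  have h1 : (x i).coeff p.1 ≠ 0 := fun h => hp (by rw [h, zero_mul])
  have h2 : ((f (e i)) j).coeff p.2 ≠ 0 := fun h => hp (by rw [h, mul_zero])
  have e1 := hx i p.1 h1
  have e2 := hf i j p.2 h2
  have e3 : p.1 + p.2 = k := Finset.HasAntidiagonal.mem_antidiagonal.mp hpmem
  omega

lemma gcomp {m n p : ℕ} {gr₁ : Fin m → ℤ} {gr₂ : Fin n → ℤ} {gr₃ : Fin p → ℤ}
    {a b c : ℤ} {f : V n →ₗ[R] V p} {g : V m →ₗ[R] V n}
    (hf : GradedMap gr₂ gr₃ b f) (hg : GradedMap gr₁ gr₂ a g)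
    (h : a + b = c) : GradedMap gr₁ gr₃ c (f ∘ₗ g) := by
  intro i
  have h2 := homog_map hf (hg i)
  rw [LinearMap.comp_apply, show gr₁ i + c = gr₁ i + a + b by omega]
  exact h2

lemma gadd {m n : ℕ} {gr₁ : Fin m → ℤ} {gr₂ : Fin n → ℤ} {dg : ℤ}
    {f g : V m →ₗ[R] V n} (hf : GradedMap gr₁ gr₂ dg f) (hg : GradedMap gr₁ gr₂ dg g) :
    GradedMap gr₁ gr₂ dg (f + g) := fun i => by
  rw [LinearMap.add_apply]; exact homog_add (hf i) (hg i)

set_option maxHeartbeats 1600000 in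
/-- transfer of almost ι-structures along homotopy equivalences:
`ι₂ := f ∘ ι₁ ∘ g` makes `C₂` an almost ι-complex locally equivalent to `C₁`,
with `f` and `g` local maps. -/
theorem transfer_along_homotopy_equiv (C₁ : PreAI) (h₁ : IsAICplx C₁)
    (C₂ : PreCplx) (h₂ : IsCplx C₂)
    (f : V C₁.n →ₗ[R] V C₂.n) (g : V C₂.n →ₗ[R] V C₁.n)
    (hfgr : GradedMap C₁.gr C₂.gr 0 f) (hggr : GradedMap C₂.gr C₁.gr 0 g)
    (hfc : f ∘ₗ C₁.d = C₂.d ∘ₗ f) (hgc : g ∘ₗ C₂.d = C₁.d ∘ₗ g)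
    (hgf : ∃ H : V C₁.n →ₗ[R] V C₁.n, GradedMap C₁.gr C₁.gr 1 H ∧
      g ∘ₗ f + LinearMap.id = H ∘ₗ C₁.d + C₁.d ∘ₗ H)
    (hfg : ∃ H : V C₂.n →ₗ[R] V C₂.n, GradedMap C₂.gr C₂.gr 1 H ∧
      f ∘ₗ g + LinearMap.id = H ∘ₗ C₂.d + C₂.d ∘ₗ H) :
    IsAICplx ⟨C₂, f ∘ₗ C₁.ι ∘ₗ g⟩ ∧
    isLocalMap C₁ ⟨C₂, f ∘ₗ C₁.ι ∘ₗ g⟩ f ∧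
    isLocalMap ⟨C₂, f ∘ₗ C₁.ι ∘ₗ g⟩ C₁ g := by
  obtain ⟨⟨hd1gr, hd1sq⟩, hιgr, hD, ⟨G, hGgr, hGmod⟩, ⟨x₁, hx₁cyc, hx₁hom, hx₁nb, hx₁gen⟩⟩ := h₁
  obtain ⟨hd2gr, hd2sq⟩ := h₂
  obtain ⟨H, hHgr, hH⟩ := hgf
  obtain ⟨H', hH'gr, hH'⟩ := hfg
  -- pointwise forms of hypotheses
  have hgcx : ∀ y, g (C₂.d y) = C₁.d (g y) := fun y => by
    have := LinearMap.ext_iff.mp hgc y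
    simpa using this
  have hfcx : ∀ y, f (C₁.d y) = C₂.d (f y) := fun y => by
    have := LinearMap.ext_iff.mp hfc y
    simpa using this
  have hgfx : ∀ y, g (f y) = y + H (C₁.d y) + C₁.d (H y) := by
    intro y
    have h0 := LinearMap.ext_iff.mp hH y
    simp only [LinearMap.add_apply, LinearMap.comp_apply, LinearMap.id_apply] at h0
    calc g (f y) = g (f y) + (y + y) := by rw [Vadd_self, add_zero]
      _ = (g (f y) + y) + y := by rw [add_assoc]
      _ = (H (C₁.d y) + C₁.d (H y)) + y := by rw [h0]
      _ = y + H (C₁.d y) + C₁.d (H y) := by abel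
  have hfgx : ∀ y, f (g y) = y + H' (C₂.d y) + C₂.d (H' y) := by
    intro y
    have h0 := LinearMap.ext_iff.mp hH' y
    simp only [LinearMap.add_apply, LinearMap.comp_apply, LinearMap.id_apply] at h0
    calc f (g y) = f (g y) + (y + y) := by rw [Vadd_self, add_zero]
      _ = (f (g y) + y) + y := by rw [add_assoc]
      _ = (H' (C₂.d y) + C₂.d (H' y)) + y := by rw [h0]
      _ = y + H' (C₂.d y) + C₂.d (H' y) := by abel
  have hDx : ∀ z, modU (C₁.ι (C₁.d z) + C₁.d (C₁.ι z)) := fun z => by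
    have := hD z
    simpa only [LinearMap.add_apply, LinearMap.comp_apply] using this
  have hGx : ∀ z, modU (C₁.ι (C₁.ι z) + z + G (C₁.d z) + C₁.d (G z)) := fun z => by
    have := hGmod z
    simpa only [LinearMap.add_apply, LinearMap.comp_apply, LinearMap.id_apply] using this
  have hx₁c : C₁.d x₁ = 0 := hx₁cyc
  -- boundary-transfer helpers
  have hpull : ∀ (w : V C₁.n), C₁.d w = 0 → ∀ (k : ℕ) (z : V C₂.n),
      C₂.d z = Uu ^ k • f w → C₁.d (g z + Uu ^ k • H w) = Uu ^ k • w := by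
    intro w hw k z hz
    have h1 : C₁.d (g z) = Uu ^ k • g (f w) := by rw [← hgcx, hz, map_smul]
    rw [map_add, map_smul, h1, hgfx, hw, map_zero, add_zero, smul_add,
      add_assoc, Vadd_self, add_zero]
  have hpush : ∀ (w : V C₂.n), C₂.d w = 0 → ∀ (k : ℕ) (z : V C₁.n),
      C₁.d z = Uu ^ k • g w → C₂.d (f z + Uu ^ k • H' w) = Uu ^ k • w := by
    intro w hw k z hz
    have h1 : C₂.d (f z) = Uu ^ k • f (g w) := by rw [← hfcx, hz, map_smul]
    rw [map_add, map_smul, h1, hfgx, hw, map_zero, add_zero, smul_add,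
      add_assoc, Vadd_self, add_zero]
  refine ⟨⟨⟨hd2gr, hd2sq⟩, ?_, ?_, ?_, ?_⟩, ⟨⟨hfgr, hfc, ?_⟩, ?_⟩, ⟨⟨hggr, hgc, ?_⟩, ?_⟩⟩
  · -- ι₂ graded
    have h1 : GradedMap C₂.gr C₁.gr 0 (C₁.ι ∘ₗ g) := gcomp hιgr hggr (by norm_num)
    exact gcomp hfgr h1 (by norm_num)
  · -- ι₂ ∂ + ∂ ι₂ ≡ 0 mod U
    intro x
    have hmod : modU (f (C₁.ι (C₁.d (g x)) + C₁.d (C₁.ι (g x)))) := modU_map f (hDx (g x))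
    convert hmod using 1
    simp only [LinearMap.add_apply, LinearMap.comp_apply, map_add, hgcx, hfcx]
  · -- ι₂² ≃ id mod U
    have h1 : GradedMap C₂.gr C₁.gr 1 (G ∘ₗ g) := gcomp hGgr hggr (by norm_num)
    have h2 : GradedMap C₂.gr C₂.gr 1 (f ∘ₗ G ∘ₗ g) := gcomp hfgr h1 (by norm_num)
    have h3 : GradedMap C₂.gr C₁.gr 0 (C₁.ι ∘ₗ g) := gcomp hιgr hggr (by norm_num)
    have h4 : GradedMap C₂.gr C₁.gr 1 (H ∘ₗ C₁.ι ∘ₗ g) := gcomp hHgr h3 (by norm_num)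
    have h5 : GradedMap C₂.gr C₁.gr 1 (C₁.ι ∘ₗ H ∘ₗ C₁.ι ∘ₗ g) := gcomp hιgr h4 (by norm_num)
    have h6 : GradedMap C₂.gr C₂.gr 1 (f ∘ₗ C₁.ι ∘ₗ H ∘ₗ C₁.ι ∘ₗ g) := gcomp hfgr h5 (by norm_num)
    refine ⟨H' + f ∘ₗ G ∘ₗ g + f ∘ₗ C₁.ι ∘ₗ H ∘ₗ C₁.ι ∘ₗ g,
      gadd (gadd hH'gr h2) h6, ?_⟩
    intro x
    have hmod : modU (f (C₁.ι (C₁.ι (g x)) + g x + G (C₁.d (g x)) + C₁.d (G (g x)))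
          + f (C₁.ι (H (C₁.ι (C₁.d (g x)) + C₁.d (C₁.ι (g x)))))
          + f (C₁.ι (C₁.d (H (C₁.ι (g x)))) + C₁.d (C₁.ι (H (C₁.ι (g x)))))) :=
      modU_add' (modU_add' (modU_map f (hGx (g x)))
        (modU_map f (modU_map C₁.ι (modU_map H (hDx (g x))))))
        (modU_map f (hDx (H (C₁.ι (g x)))))
    convert hmod using 1
    simp only [LinearMap.add_apply, LinearMap.comp_apply, LinearMap.id_apply,
      map_add, hgfx, hfgx, hgcx, hfcx]
    abel
  · -- HtowerCond for C₂
    refine ⟨f x₁, ?_, ?_, ?_, ?_⟩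
    · show C₂.d (f x₁) = 0
      rw [← hfcx, hx₁c, map_zero]
    · have := homog_map hfgr hx₁hom
      rwa [add_zero] at this
    · intro k hbd
      obtain ⟨z, hz⟩ := hbd
      exact hx₁nb k ⟨g z + Uu ^ k • H x₁, hpull x₁ hx₁c k z hz⟩
    · intro y hy
      have hyc : C₂.d y = 0 := hy
      have hgyc : IsCycle C₁.toPreCplx (g y) := by
        show C₁.d (g y) = 0
        rw [← hgcx, hyc, map_zero]
      obtain ⟨k, p, z, hkpz⟩ := hx₁gen (g y) hgyc
      refine ⟨k, p, f z + Uu ^ k • H' y, ?_⟩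
      have h2 : f (Uu ^ k • g y) = f (p • x₁ + C₁.d z) := congrArg f hkpz
      rw [map_smul, map_add, map_smul, hfgx, hfcx, hyc, map_zero, add_zero, smul_add] at h2
      -- h2 : Uu^k • y + Uu^k • C₂.d (H' y) = p • f x₁ + C₂.d (f z)
      rw [map_add, map_smul]
      calc Uu ^ k • y = (Uu ^ k • y + Uu ^ k • C₂.d (H' y)) + Uu ^ k • C₂.d (H' y) := by
            rw [add_assoc, Vadd_self, add_zero]
        _ = (p • f x₁ + C₂.d (f z)) + Uu ^ k • C₂.d (H' y) := by rw [h2]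
        _ = p • f x₁ + (C₂.d (f z) + Uu ^ k • C₂.d (H' y)) := by abel
  · -- f ι₁ ≃ ι₂ f mod U
    have h1 : GradedMap C₁.gr C₁.gr 1 (C₁.ι ∘ₗ H) := gcomp hιgr hHgr (by norm_num)
    refine ⟨f ∘ₗ C₁.ι ∘ₗ H, gcomp hfgr h1 (by norm_num), ?_⟩
    intro x
    have hmod : modU (f (C₁.ι (C₁.d (H x)) + C₁.d (C₁.ι (H x)))) := modU_map f (hDx (H x))
    convert hmod using 1
    simp only [LinearMap.add_apply, LinearMap.comp_apply, map_add, hgfx, hfcx]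
    abel_nf
    simp only [Vzsmul_two, Vnsmul_two, add_zero, zero_add, smul_zero]
    try abel
  · -- f preserves nontorsion classes
    rintro x ⟨hxc, hxnb⟩
    have hxc' : C₁.d x = 0 := hxc
    refine ⟨?_, ?_⟩
    · show C₂.d (f x) = 0
      rw [← hfcx, hxc', map_zero]
    · intro k hbd
      obtain ⟨z, hz⟩ := hbd
      exact hxnb k ⟨g z + Uu ^ k • H x, hpull x hxc' k z hz⟩
  · -- g ι₂ ≃ ι₁ g mod U
    have h1 : GradedMap C₂.gr C₁.gr 0 (C₁.ι ∘ₗ g) := gcomp hιgr hggr (by norm_num)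
    refine ⟨H ∘ₗ C₁.ι ∘ₗ g, gcomp hHgr h1 (by norm_num), ?_⟩
    intro x
    have hmod : modU (H (C₁.ι (C₁.d (g x)) + C₁.d (C₁.ι (g x)))) := modU_map H (hDx (g x))
    convert hmod using 1
    simp only [LinearMap.add_apply, LinearMap.comp_apply, map_add, hgfx, hgcx]
    abel_nf
    simp only [Vzsmul_two, Vnsmul_two, add_zero, zero_add, smul_zero]
    try abel
  · -- g preserves nontorsion classes
    rintro x ⟨hxc, hxnb⟩
    have hxc' : C₂.d x = 0 := hxc
    refine ⟨?_, ?_⟩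
    · show C₁.d (g x) = 0
      rw [← hgcx, hxc', map_zero]
    · intro k hbd
      obtain ⟨z, hz⟩ := hbd
      exact hxnb k ⟨f z + Uu ^ k • H' x, hpush x hxc' k z hz⟩

end AI
end
end

section
/- For the standard complexes C(a_i,b_i): if the parameter sequence (a_1,b_2,...,a_{2m-1},b_{2m}) is ≤ the sequence (a_1',b_2',...,a_{2n-1}',b_{2n}') in the lexicographic order induced by the modified order on Z (−1 <! −2 <! ⋯ <! 0 <! ⋯ <! 2 <! 1, shorter sequences padded by zeros), then there exists a local map from C(a_i,b_i) to C(a_i',b_i'). -/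
open Polynomial

noncomputable section

/-!
Write `b = M_k`, `b' = M'_k` for the first position `k` where the sequences differ, so `b <! b'`
(or both sequences are exhausted at `k`). The map `T_i ↦ T_i` for `i ≤ k`,
`T_{k+1} ↦ U^{b - b'} T_{k+1}` when `k` is a `b`-position and `b, b'` have the same sign, and
`T_i ↦ 0` otherwise, is a graded chain map; the inequality `b <! b'` is exactly what makes it
commute with `∂` across the arrow between `T_k` and `T_{k+1}`. It commutes with `ω` mod `U`
because every generator past `T_k` is sent into `U · C(M')` (the exponent `b - b'` is positive),
while on the `a`-arrow between `T_k` and `T_{k+1}` one has `b' ≠ -1` and `b ≠ 1`, these being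
the least and the greatest element for `<!`.
The map is local: in a standard complex the differential matches the generators other than
`T_0` in pairs with `U`-power weights, so a cycle is `U`-nontorsion exactly when its
`T_0`-coordinate is nonzero.
-/

namespace AI

lemma Uu_pow_ne_zero (a : ℕ) : Uu ^ a ≠ 0 :=
  pow_ne_zero a X_ne_zero

lemma seqAt_eq_zero {M : List ℤ} {s : ℕ} (h : M.length ≤ s) : seqAt M s = 0 :=
  List.getD_eq_default _ _ h

section FreeModules

variable {m n : ℕ}

lemma e_eq_single (i : Fin n) : e i = Pi.single i 1 := by
  funext j
  simp [e, Pi.single_apply]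

lemma linearMap_ext_e {f g : V m →ₗ[R] V n} (h : ∀ i, f (e i) = g (e i)) : f = g :=
  (Pi.basisFun R (Fin m)).ext fun i => by simpa [e_eq_single] using h i

lemma sum_smul_e (x : V n) : ∑ i, x i • e i = x := by
  simpa [e_eq_single] using (Pi.basisFun R (Fin n)).sum_repr x

lemma modU_of_e (g : V m →ₗ[R] V n) (h : ∀ i, modU (g (e i))) (x : V m) : modU (g x) := by
  intro j
  rw [← sum_smul_e x, map_sum]
  simp [finsetSum_coeff, mul_coeff_zero, h _ j]

lemma ofMatrix_apply (c : ℕ → ℕ → R) (x : V n) (j : Fin n) :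
    ofMatrix c x j = ∑ i : Fin n, x i * c i j :=
  rfl

lemma ofMatrix_e (c : ℕ → ℕ → R) (i j : Fin n) : ofMatrix c (e i) j = c i j := by
  simp [ofMatrix_apply, e]

def diagMap (u : ℕ → R) : V m →ₗ[R] V n where
  toFun x j := if h : (j : ℕ) < m then x ⟨j, h⟩ * u j else 0
  map_add' x y := by
    funext j
    by_cases h : (j : ℕ) < m <;> simp [h, add_mul]
  map_smul' r x := by
    funext j
    by_cases h : (j : ℕ) < m <;> simp [h, mul_assoc]

lemma diagMap_apply (u : ℕ → R) (x : V m) (j : Fin n) :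
    diagMap u x j = if h : (j : ℕ) < m then x ⟨j, h⟩ * u j else 0 :=
  rfl

lemma diagMap_e (u : ℕ → R) (i : Fin m) (j : Fin n) :
    diagMap (n := n) u (e i) j = if (i : ℕ) = j then u i else 0 := by
  rw [diagMap_apply]
  split_ifs with h₁ h₂ h₂
  · simp [e, Fin.ext_iff, h₂]
  · simp [e, Fin.ext_iff, Ne.symm h₂]
  · exact absurd i.isLt (by omega)
  · rfl

variable {u : ℕ → R} {c c' : ℕ → ℕ → R}

lemma diagMap_ofMatrix_e (hc : ∀ i j, i < m → m ≤ j → c i j = 0) (i : Fin m) (j : Fin n) :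
    diagMap u (ofMatrix c (e i)) j = c i j * u j := by
  rw [diagMap_apply]
  split_ifs with hj
  · rw [ofMatrix_e]
  · rw [hc i j i.isLt (not_lt.1 hj), zero_mul]

lemma ofMatrix_diagMap_e (hc' : ∀ i j, j < n → n ≤ i → c' i j = 0) (i : Fin m) (j : Fin n) :
    ofMatrix c' (diagMap u (e i)) j = u i * c' i j := by
  simp only [ofMatrix_apply, diagMap_e, ite_mul, zero_mul]
  rw [Fin.sum_univ_eq_sum_range (fun s => if (i : ℕ) = s then u i * c' s j else 0),
    Finset.sum_ite_eq]
  by_cases hi : (i : ℕ) < n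
  · simp [hi]
  · simp [hi, hc' i j j.isLt (not_lt.1 hi)]

lemma diagMap_comp_ofMatrix (hc : ∀ i j, i < m → m ≤ j → c i j = 0)
    (hc' : ∀ i j, j < n → n ≤ i → c' i j = 0) (hcomm : ∀ i j, c i j * u j = u i * c' i j) :
    diagMap (m := m) (n := n) u ∘ₗ ofMatrix c = ofMatrix c' ∘ₗ diagMap u :=
  linearMap_ext_e fun i => funext fun j => by
    simp only [LinearMap.comp_apply, diagMap_ofMatrix_e hc, ofMatrix_diagMap_e hc', hcomm]

lemma modU_diagMap_comp_ofMatrix_add (hc : ∀ i j, i < m → m ≤ j → c i j = 0)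
    (hc' : ∀ i j, j < n → n ≤ i → c' i j = 0)
    (hcomm : ∀ i j, (c i j * u j + u i * c' i j).coeff 0 = 0) (x : V m) :
    modU ((diagMap u ∘ₗ ofMatrix c + ofMatrix c' ∘ₗ diagMap u : V m →ₗ[R] V n) x) :=
  modU_of_e _ (fun i j => by
    simpa [diagMap_ofMatrix_e hc, ofMatrix_diagMap_e hc', mul_coeff_zero] using hcomm i j) x

lemma diagMap_graded (g g' : ℕ → ℤ)
    (hu : ∀ i, u i = 0 ∨ ∃ a : ℕ, u i = Uu ^ a ∧ g' i - 2 * a = g i) :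
    GradedMap (fun i : Fin m => g i) (fun j : Fin n => g' j) 0 (diagMap u) := by
  intro i j a ha
  rw [diagMap_e] at ha
  split_ifs at ha with hij
  · rcases hu i with h0 | ⟨b, hb, hg⟩
    · simp [h0] at ha
    · rw [hb, Uu, coeff_X_pow] at ha
      split_ifs at ha with hab
      · simp only [← hij, hab, add_zero, hg]
      · exact absurd rfl ha
  · exact absurd rfl ha

end FreeModules

section Coefficients

variable (M : List ℤ)

lemma dCoef_self_succ (s : ℕ) :
    dCoef M s (s + 1) = if s % 2 = 1 ∧ seqAt M s < 0 then Uu ^ (seqAt M s).natAbs else 0 := by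
  unfold dCoef
  split_ifs <;> first | rfl | omega

lemma dCoef_succ_self (s : ℕ) :
    dCoef M (s + 1) s = if s % 2 = 1 ∧ 0 < seqAt M s then Uu ^ (seqAt M s).natAbs else 0 := by
  simp only [dCoef, Nat.add_sub_cancel, and_true]
  split_ifs <;> first | rfl | omega

lemma dCoef_of_not_adjacent {i j : ℕ} (h₁ : j ≠ i + 1) (h₂ : i ≠ j + 1) : dCoef M i j = 0 := by
  unfold dCoef
  rw [if_neg (by omega), if_neg (by omega)]

lemma wCoef_self_succ (s : ℕ) :
    wCoef M s (s + 1) = if s % 2 = 0 ∧ seqAt M s = -1 then 1 else 0 := by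
  unfold wCoef
  split_ifs <;> first | rfl | omega

lemma wCoef_succ_self (s : ℕ) :
    wCoef M (s + 1) s = if s % 2 = 0 ∧ seqAt M s = 1 then 1 else 0 := by
  simp only [wCoef, Nat.add_sub_cancel, and_true]
  split_ifs <;> first | rfl | omega

lemma wCoef_of_not_adjacent {i j : ℕ} (h₁ : j ≠ i + 1) (h₂ : i ≠ j + 1) : wCoef M i j = 0 := by
  unfold wCoef
  rw [if_neg (by omega), if_neg (by omega)]

lemma dCoef_eq_zero_of_length_lt {i j : ℕ} (h : M.length < max i j) : dCoef M i j = 0 := by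
  obtain rfl | rfl | ⟨h₁, h₂⟩ : j = i + 1 ∨ i = j + 1 ∨ (j ≠ i + 1 ∧ i ≠ j + 1) := by omega
  · simp [dCoef_self_succ, seqAt_eq_zero (show M.length ≤ i by omega)]
  · simp [dCoef_succ_self, seqAt_eq_zero (show M.length ≤ j by omega)]
  · exact dCoef_of_not_adjacent M h₁ h₂

lemma iCoef_eq_zero_of_length_lt {i j : ℕ} (hij : i ≠ j) (h : M.length < max i j) :
    iCoef M i j = 0 := by
  obtain rfl | rfl | ⟨h₁, h₂⟩ : j = i + 1 ∨ i = j + 1 ∨ (j ≠ i + 1 ∧ i ≠ j + 1) := by omega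
  · simp [iCoef, wCoef_self_succ, seqAt_eq_zero (show M.length ≤ i by omega)]
  · simp [iCoef, wCoef_succ_self, seqAt_eq_zero (show M.length ≤ j by omega)]
  · simp [iCoef, hij, wCoef_of_not_adjacent M h₁ h₂]

lemma dCoef_zero_right (i : ℕ) : dCoef M i 0 = 0 := by
  unfold dCoef
  rw [if_neg (by omega), if_neg (by omega)]

lemma adjacent_of_dCoef_ne_zero {i j : ℕ} (h : dCoef M i j ≠ 0) :
    (i % 2 = 1 ∧ j = i + 1) ∨ (j % 2 = 1 ∧ i = j + 1) := by
  unfold dCoef at h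
  split_ifs at h
  · omega
  · omega
  · exact absurd rfl h

lemma dCoef_eq_zero_or_pow (i j : ℕ) : dCoef M i j = 0 ∨ ∃ a : ℕ, dCoef M i j = Uu ^ a := by
  unfold dCoef
  split_ifs <;> simp

lemma dCoef_adjacent_ne_zero (hM : StdParams M) {s : ℕ} (hs : s < M.length) (hodd : s % 2 = 1) :
    dCoef M s (s + 1) ≠ 0 ∨ dCoef M (s + 1) s ≠ 0 := by
  have hb : seqAt M s ≠ 0 := by simpa [hodd] using hM.2 s hs
  rw [dCoef_self_succ, dCoef_succ_self]
  rcases hb.lt_or_gt with hb | hb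
  · simp [hodd, hb, Uu]
  · simp [hodd, hb, Uu]

end Coefficients

section Torsion

variable {n : ℕ}

def uTorsionRange (d : V n →ₗ[R] V n) : Submodule R (V n) where
  carrier := {x | ∃ K : ℕ, Uu ^ K • x ∈ LinearMap.range d}
  add_mem' := by
    rintro x y ⟨K, hx⟩ ⟨L, hy⟩
    refine ⟨K + L, ?_⟩
    rw [smul_add]
    refine add_mem ?_ ?_
    · rw [add_comm, pow_add, mul_smul]
      exact Submodule.smul_mem _ _ hx
    · rw [pow_add, mul_smul]
      exact Submodule.smul_mem _ _ hy
  zero_mem' := ⟨0, by simp⟩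
  smul_mem' c x := by
    rintro ⟨K, hx⟩
    exact ⟨K, by rw [smul_comm]; exact Submodule.smul_mem _ c hx⟩

/-- The coefficient of a cycle on the source of a matched pair vanishes, since nothing else hits
its partner; a `U`-power of the target of a matched pair is a boundary. -/
theorem mem_uTorsionRange_of_matching (c : ℕ → ℕ → R)
    (hrow : ∀ i j j', c i j ≠ 0 → c i j' ≠ 0 → j = j')
    (hcol : ∀ i i' j, c i j ≠ 0 → c i' j ≠ 0 → i = i')
    (hpow : ∀ i j, c i j = 0 ∨ ∃ a : ℕ, c i j = Uu ^ a)
    {x : V n} (hx : ofMatrix c x = 0)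
    (hcover : ∀ j : Fin n, x j = 0 ∨ ∃ p : Fin n, c j p ≠ 0 ∨ c p j ≠ 0) :
    x ∈ uTorsionRange (ofMatrix c) := by
  rw [← sum_smul_e x]
  refine Submodule.sum_mem _ fun j _ => ?_
  rcases hcover j with h0 | ⟨p, hsource | htarget⟩
  · simp [h0]
  · have hxp : x j * c j p = 0 := by
      have hp : ∑ i, x i * c i p = 0 := congrFun hx p
      rwa [Finset.sum_eq_single j (fun i _ hij => ?_) (by simp)] at hp
      by_cases hi : c i p = 0
      · rw [hi, mul_zero]
      · exact absurd (Fin.ext (hcol i j p hi hsource)) hij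
    simp [(mul_eq_zero.1 hxp).resolve_right hsource]
  · obtain ⟨a, ha⟩ := (hpow p j).resolve_left htarget
    refine Submodule.smul_mem _ _ ⟨a, e p, funext fun j' => ?_⟩
    rw [ofMatrix_e, Pi.smul_apply, e, smul_eq_mul]
    split_ifs with hj'
    · rw [hj', ha, mul_one]
    · rw [mul_zero]
      by_contra hne
      exact hj' (Fin.ext (hrow p j' j hne htarget))

end Torsion

section StandardComplex

variable {M : List ℤ}

lemma ofMatrix_dCoef_apply_zero {n : ℕ} (y : V (n + 1)) : ofMatrix (dCoef M) y 0 = 0 := by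
  simp [ofMatrix_apply, dCoef_zero_right]

lemma mem_uTorsionRange_of_isCycle (hM : StdParams M) {x : V (M.length + 1)}
    (hx : IsCycle (symCplx M).toPreCplx x) (h0 : x 0 = 0) :
    x ∈ uTorsionRange (symCplx M).d := by
  refine mem_uTorsionRange_of_matching (dCoef M) (fun i j j' h h' => ?_)
    (fun i i' j h h' => ?_) (dCoef_eq_zero_or_pow M) hx (fun j => ?_)
  · have := adjacent_of_dCoef_ne_zero M h
    have := adjacent_of_dCoef_ne_zero M h'
    omega
  · have := adjacent_of_dCoef_ne_zero M h
    have := adjacent_of_dCoef_ne_zero M h'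
    omega
  · have hjlen : (j : ℕ) < M.length + 1 := j.isLt
    by_cases hj : (j : ℕ) = 0
    · exact Or.inl (by rwa [show j = (0 : Fin (M.length + 1)) from Fin.ext hj])
    have hlen := hM.1
    have hn : (symCplx M).n = M.length + 1 := rfl
    right
    by_cases hodd : (j : ℕ) % 2 = 1
    · refine ⟨⟨j + 1, by omega⟩, ?_⟩
      exact dCoef_adjacent_ne_zero M hM (by omega) hodd
    · refine ⟨⟨j - 1, by omega⟩, ?_⟩
      have hj : (j : ℕ) = (j - 1) + 1 := by omega
      simpa only [← hj, or_comm] using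
        dCoef_adjacent_ne_zero M hM (s := j - 1) (by omega) (by omega)

lemma ne_zero_of_nontorsionClass (hM : StdParams M) {x : V (M.length + 1)}
    (hx : NontorsionClass (symCplx M).toPreCplx x) : x 0 ≠ 0 := fun h0 =>
  let ⟨K, hK⟩ := mem_uTorsionRange_of_isCycle hM hx.1 h0
  hx.2 K (LinearMap.mem_range.1 hK)

lemma nontorsionClass_of_ne_zero {x : V (M.length + 1)} (hx : IsCycle (symCplx M).toPreCplx x)
    (h0 : x 0 ≠ 0) : NontorsionClass (symCplx M).toPreCplx x := by
  refine ⟨hx, fun K hK => ?_⟩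
  obtain ⟨y, hy⟩ : ∃ y : V (M.length + 1), ofMatrix (dCoef M) y = Uu ^ K • x := hK
  have hy0 := congrFun hy 0
  rw [ofMatrix_dCoef_apply_zero] at hy0
  exact mul_ne_zero (Uu_pow_ne_zero K) h0 hy0.symm

end StandardComplex

section LexMap

/-- An `omega`-friendly form of `(∀ i < k, M_i = M'_i) ∧ (M_k <! M'_k ∨ M_k = M'_k = 0)`;
the second disjunct covers equal sequences. -/
structure LexLeAt (M M' : List ℤ) (k : ℕ) : Prop where
  agree : ∀ i < k, seqAt M i = seqAt M' i
  neg : seqAt M' k < 0 → seqAt M' k < seqAt M k ∧ seqAt M k < 0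
  pos : 0 < seqAt M k → seqAt M' k < seqAt M k ∧ 0 < seqAt M' k

variable {M M' : List ℤ} {k : ℕ}

lemma lexLeAt_of_ltB (hagree : ∀ i < k, seqAt M i = seqAt M' i)
    (hlt : ltB (seqAt M k) (seqAt M' k)) : LexLeAt M M' k := by
  unfold ltB at hlt
  exact ⟨hagree, by omega, by omega⟩

lemma lexLeAt_length_of_eq (h : ∀ i, seqAt M i = seqAt M' i) : LexLeAt M M' M.length := by
  have h0 := seqAt_eq_zero (le_refl M.length)
  have h0' := h M.length
  exact ⟨fun i _ => h i, by omega, by omega⟩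

/-- The exponent of `T_{k+1}` makes the map commute with the arrows
`∂T_k = U^{-b} T_{k+1}`, `∂T_k = U^{-b'} T_{k+1}` (for `b' < b < 0`) resp.
`∂T_{k+1} = U^b T_k`, `∂T_{k+1} = U^{b'} T_k` (for `0 < b' < b`). -/
def lexMapCoef (M M' : List ℤ) (k i : ℕ) : R :=
  if i ≤ k then 1
  else if i = k + 1 ∧ k % 2 = 1 ∧
      ((seqAt M k < 0 ∧ seqAt M' k < 0) ∨ (0 < seqAt M k ∧ 0 < seqAt M' k)) then
    Uu ^ (seqAt M k - seqAt M' k).toNat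
  else 0

lemma lexMapCoef_of_le {i : ℕ} (hi : i ≤ k) : lexMapCoef M M' k i = 1 :=
  if_pos hi

lemma lexMapCoef_succ : lexMapCoef M M' k (k + 1) =
    if k % 2 = 1 ∧ ((seqAt M k < 0 ∧ seqAt M' k < 0) ∨ (0 < seqAt M k ∧ 0 < seqAt M' k)) then
      Uu ^ (seqAt M k - seqAt M' k).toNat
    else 0 := by
  simp [lexMapCoef]

lemma lexMapCoef_of_succ_lt {i : ℕ} (hi : k + 1 < i) : lexMapCoef M M' k i = 0 := by
  unfold lexMapCoef
  rw [if_neg (by omega), if_neg (by omega)]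

lemma lexMapCoef_of_lt_of_odd {i : ℕ} (hi : k < i) (hodd : i % 2 = 1) :
    lexMapCoef M M' k i = 0 := by
  unfold lexMapCoef
  rw [if_neg (by omega), if_neg (by omega)]

lemma stdGr_succ (M : List ℤ) (i : ℕ) :
    stdGr M (i + 1) = stdGr M i + if i % 2 = 1 then bstep (seqAt M i) else 0 :=
  Finset.sum_range_succ _ _

namespace LexLeAt

variable (h : LexLeAt M M' k)
include h

lemma coeff_zero_lexMapCoef {i : ℕ} (hi : k < i) : (lexMapCoef M M' k i).coeff 0 = 0 := by
  have := h.neg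
  have := h.pos
  unfold lexMapCoef
  rw [if_neg (by omega)]
  split_ifs
  · rw [Uu, coeff_X_pow, if_neg (by omega)]
  · rfl

lemma stdGr_eq {i : ℕ} (hi : i ≤ k) : stdGr M i = stdGr M' i :=
  Finset.sum_congr rfl fun s hs => by
    rw [h.agree s ((Finset.mem_range.1 hs).trans_le hi)]

lemma lexMapCoef_eq_zero_or_homog (i : ℕ) : lexMapCoef M M' k i = 0 ∨
    ∃ a : ℕ, lexMapCoef M M' k i = Uu ^ a ∧ stdGr M' i - 2 * a = stdGr M i := by
  rcases lt_trichotomy i (k + 1) with hi | rfl | hi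
  · exact Or.inr ⟨0, lexMapCoef_of_le (by omega), by simp [h.stdGr_eq (by omega : i ≤ k)]⟩
  · rw [lexMapCoef_succ]
    split_ifs with hs
    · refine Or.inr ⟨_, rfl, ?_⟩
      have := h.neg
      have := h.pos
      rw [stdGr_succ, stdGr_succ, h.stdGr_eq le_rfl, if_pos hs.1, if_pos hs.1, bstep, bstep]
      split_ifs <;> omega
    · exact Or.inl rfl
  · exact Or.inl (lexMapCoef_of_succ_lt hi)

lemma dCoef_mul_lexMapCoef (i j : ℕ) :
    dCoef M i j * lexMapCoef M M' k j = lexMapCoef M M' k i * dCoef M' i j := by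
  have := h.neg
  have := h.pos
  obtain rfl | rfl | ⟨h₁, h₂⟩ : j = i + 1 ∨ i = j + 1 ∨ (j ≠ i + 1 ∧ i ≠ j + 1) := by omega
  · rw [dCoef_self_succ, dCoef_self_succ]
    rcases lt_trichotomy i k with hi | rfl | hi
    · rw [lexMapCoef_of_le (by omega : i + 1 ≤ k), lexMapCoef_of_le hi.le, h.agree i hi]
      simp
    · rw [lexMapCoef_of_le le_rfl, lexMapCoef_succ]
      split_ifs <;> first | omega | (rw [← pow_add, one_mul]; congr 1; omega) | simp
    · rw [lexMapCoef_of_succ_lt (by omega : k + 1 < i + 1)]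
      by_cases hodd : i % 2 = 1
      · simp [lexMapCoef_of_lt_of_odd hi hodd]
      · simp [hodd]
  · rw [dCoef_succ_self, dCoef_succ_self]
    rcases lt_trichotomy j k with hj | rfl | hj
    · rw [lexMapCoef_of_le (by omega : j + 1 ≤ k), lexMapCoef_of_le hj.le, h.agree j hj]
      simp
    · rw [lexMapCoef_of_le le_rfl, lexMapCoef_succ]
      split_ifs <;> first | omega | (rw [← pow_add, mul_one]; congr 1; omega) | simp
    · rw [lexMapCoef_of_succ_lt (by omega : k + 1 < j + 1)]
      by_cases hodd : j % 2 = 1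
      · simp [lexMapCoef_of_lt_of_odd hj hodd]
      · simp [hodd]
  · rw [dCoef_of_not_adjacent M h₁ h₂, dCoef_of_not_adjacent M' h₁ h₂, zero_mul, mul_zero]

lemma coeff_zero_wCoef_mul_lexMapCoef_add (i j : ℕ) :
    (wCoef M i j * lexMapCoef M M' k j + lexMapCoef M M' k i * wCoef M' i j).coeff 0 = 0 := by
  have := h.neg
  have := h.pos
  obtain rfl | rfl | ⟨h₁, h₂⟩ : j = i + 1 ∨ i = j + 1 ∨ (j ≠ i + 1 ∧ i ≠ j + 1) := by omega
  · rw [wCoef_self_succ, wCoef_self_succ]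
    rcases lt_trichotomy i k with hi | rfl | hi
    · rw [lexMapCoef_of_le (by omega : i + 1 ≤ k), lexMapCoef_of_le hi.le, h.agree i hi,
        mul_one, one_mul, CharTwo.add_self_eq_zero, coeff_zero]
    · rw [coeff_add, mul_coeff_zero, mul_coeff_zero, h.coeff_zero_lexMapCoef (Nat.lt_succ_self _),
        lexMapCoef_of_le le_rfl]
      split_ifs <;> first | omega | simp
    · rw [coeff_add, mul_coeff_zero, mul_coeff_zero, h.coeff_zero_lexMapCoef hi,
        h.coeff_zero_lexMapCoef (by omega : k < i + 1), mul_zero, zero_mul, add_zero]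
  · rw [wCoef_succ_self, wCoef_succ_self]
    rcases lt_trichotomy j k with hj | rfl | hj
    · rw [lexMapCoef_of_le (by omega : j + 1 ≤ k), lexMapCoef_of_le hj.le, h.agree j hj,
        mul_one, one_mul, CharTwo.add_self_eq_zero, coeff_zero]
    · rw [coeff_add, mul_coeff_zero, mul_coeff_zero, h.coeff_zero_lexMapCoef (Nat.lt_succ_self _),
        lexMapCoef_of_le le_rfl]
      split_ifs <;> first | omega | simp
    · rw [coeff_add, mul_coeff_zero, mul_coeff_zero, h.coeff_zero_lexMapCoef hj,
        h.coeff_zero_lexMapCoef (by omega : k < j + 1), mul_zero, zero_mul, add_zero]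
  · simp [wCoef_of_not_adjacent M h₁ h₂, wCoef_of_not_adjacent M' h₁ h₂]

lemma coeff_zero_iCoef_mul_lexMapCoef_add (i j : ℕ) :
    (iCoef M i j * lexMapCoef M M' k j + lexMapCoef M M' k i * iCoef M' i j).coeff 0 = 0 := by
  have hw := h.coeff_zero_wCoef_mul_lexMapCoef_add i j
  unfold iCoef
  split_ifs with hij
  · subst hij
    rwa [add_mul, mul_add, one_mul, mul_one, add_add_add_comm, CharTwo.add_self_eq_zero,
      zero_add]
  · simpa using hw

lemma diagMap_comp_d :
    diagMap (lexMapCoef M M' k) ∘ₗ (symCplx M).d = (symCplx M').d ∘ₗ diagMap (lexMapCoef M M' k) :=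
  diagMap_comp_ofMatrix (m := M.length + 1) (n := M'.length + 1)
    (fun i j _ hj => dCoef_eq_zero_of_length_lt M (by omega))
    (fun i j _ hi => dCoef_eq_zero_of_length_lt M' (by omega)) h.dCoef_mul_lexMapCoef

lemma isAIMorphism_diagMap :
    isAIMorphism (symCplx M) (symCplx M') (diagMap (lexMapCoef M M' k)) := by
  have hι : ∀ x, modU ((diagMap (lexMapCoef M M' k) ∘ₗ (symCplx M).ι +
      (symCplx M').ι ∘ₗ diagMap (lexMapCoef M M' k) : V (symCplx M).n →ₗ[R] V (symCplx M').n) x) :=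
    modU_diagMap_comp_ofMatrix_add (m := M.length + 1) (n := M'.length + 1)
      (fun i j hi hj => iCoef_eq_zero_of_length_lt M (by omega) (by omega))
      (fun i j hj hi => iCoef_eq_zero_of_length_lt M' (by omega) (by omega))
      h.coeff_zero_iCoef_mul_lexMapCoef_add
  exact ⟨diagMap_graded _ _ h.lexMapCoef_eq_zero_or_homog, h.diagMap_comp_d, 0,
    fun _ _ _ ha => by simp at ha, fun x => by simpa using hι x⟩

theorem isLocalMap_diagMap (hM : StdParams M) :
    isLocalMap (symCplx M) (symCplx M') (diagMap (lexMapCoef M M' k)) := by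
  refine ⟨h.isAIMorphism_diagMap, fun (x : V (M.length + 1)) hx => ?_⟩
  refine nontorsionClass_of_ne_zero ?_ ?_
  · exact (LinearMap.congr_fun h.diagMap_comp_d x).symm.trans
      ((congrArg (diagMap (lexMapCoef M M' k)) hx.1).trans (map_zero _))
  · have hx0 : diagMap (n := M'.length + 1) (lexMapCoef M M' k) x 0 = x 0 := by
      simp [diagMap_apply, lexMapCoef_of_le]
    exact hx0 ▸ ne_zero_of_nontorsionClass hM hx

end LexLeAt

end LexMap

theorem lexLe_local_map_general (M M' : List ℤ) (hM : StdParams M) (h : lexLe M M') :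
    ∃ f, isLocalMap (symCplx M) (symCplx M') f := by
  rcases h with ⟨k, hagree, hlt⟩ | heq
  · exact ⟨_, (lexLeAt_of_ltB hagree hlt).isLocalMap_diagMap hM⟩
  · exact ⟨_, (lexLeAt_length_of_eq heq).isLocalMap_diagMap hM⟩

/-- if the parameter sequences satisfy `(a_i,b_i) ≤ (a_i',b_i')`
in the lexicographic order, then there is a local map between the
corresponding standard complexes. -/
theorem lexLe_local_map (M M' : List ℤ) (hM : StdParams M) (hM' : StdParams M')
    (h : lexLe M M') :
    ∃ f, isLocalMap (symCplx M) (symCplx M') f :=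
  lexLe_local_map_general M M' hM h

end AI
end
end
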